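/- Let K ⊂ ℝ^d be a convex body (compact convex set with nonempty interior) and let φ : K → [0,∞) be continuous. Define the weighted floating body K_δ^φ as the intersection of all closed half-spaces H⁻ such that the complementary closed half-space H⁺ satisfies ∫_{K ∩ H⁺} φ dVol_d ≤ δ, and define the minimal cap density mcd(x) = min over unit vectors u of ∫_{K ∩ {y : y·u ≥ x·u}} φ dVol_d. Then the interior of K_δ^φ equals the strict superlevel set {x ∈ K : mcd(x) > δ}. -/

import Mathlib

/-!
A cap `K ∩ H⁺(u,t)` has weight `∫_{K ∩ H⁺(u,t)} φ`, and this depends continuously on `(u,t)`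
for `u ≠ 0` by dominated convergence, because hyperplanes are Lebesgue-null. Hence the minimal
cap density, an infimum over the compact sphere, is continuous and attained. The open set
`{mcd > δ}` lies in `K_δ^φ`, since caps lose weight as the level rises (`φ ≥ 0`). Conversely, if
`x` is interior to `K_δ^φ`, no cap through `x` has weight `≤ δ`: otherwise `K_δ^φ` would lie in
the half-space `{y·u ≤ x·u}`, which has `x` on its boundary. Finally `K_δ^φ ⊆ K`, as a half-space
missing the convex body `K` cuts off weight `0`.
-/

open MeasureTheory
open scoped RealInnerProductSpace

/-- The `φ`-weighted floating body `K_δ^φ`: the intersection of all closed half-spaces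
`H⁻ = {y : ⟪y,u⟫ ≤ t}` whose complementary half-space `H⁺ = {y : ⟪y,u⟫ ≥ t}` cuts off
`φ`-weighted volume at most `δ` from `K`. -/
noncomputable def weightedFloatingBody {d : ℕ} (K : Set (EuclideanSpace ℝ (Fin d)))
    (φ : EuclideanSpace ℝ (Fin d) → ℝ) (δ : ℝ) : Set (EuclideanSpace ℝ (Fin d)) :=
  ⋂ (u : EuclideanSpace ℝ (Fin d)) (_ : ‖u‖ = 1) (t : ℝ)
    (_ : ∫ y in K ∩ {y | t ≤ ⟪y, u⟫}, φ y ≤ δ), {y | ⟪y, u⟫ ≤ t}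

/-- The minimal cap density: the infimum over unit directions `u` of the `φ`-weighted
volume of the cap of `K` cut off by the hyperplane through `x` with normal `u`. -/
noncomputable def minimalCapDensity {d : ℕ} (K : Set (EuclideanSpace ℝ (Fin d)))
    (φ : EuclideanSpace ℝ (Fin d) → ℝ) (x : EuclideanSpace ℝ (Fin d)) : ℝ :=
  ⨅ u : Metric.sphere (0 : EuclideanSpace ℝ (Fin d)) 1,
    ∫ y in K ∩ {y | ⟪x, (u : EuclideanSpace ℝ (Fin d))⟫ ≤ ⟪y, (u : EuclideanSpace ℝ (Fin d))⟫}, φ y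

open Metric Set Filter Topology

section InnerProductSpace

variable {E : Type*} [NormedAddCommGroup E] [InnerProductSpace ℝ E]

theorem surjective_innerSL {u : E} (hu : u ≠ 0) : Function.Surjective (innerSL ℝ u) := fun s =>
  ⟨(s / ‖u‖ ^ 2) • u, by
    rw [innerSL_apply_apply, real_inner_smul_right, real_inner_self_eq_norm_sq,
      div_mul_cancel₀ _ (by positivity)]⟩

theorem measurableSet_setOf_le_inner [MeasurableSpace E] [BorelSpace E] (u : E) (t : ℝ) :
    MeasurableSet {y : E | t ≤ ⟪y, u⟫} :=
  (isClosed_le continuous_const (continuous_id.inner continuous_const)).measurableSet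

variable [CompleteSpace E]

theorem interior_setOf_inner_le {u : E} (hu : u ≠ 0) (t : ℝ) :
    interior {y : E | ⟪y, u⟫ ≤ t} = {y | ⟪y, u⟫ < t} := by
  simp_rw [real_inner_comm u]
  exact ((innerSL ℝ u).interior_preimage (surjective_innerSL hu) (Iic t)).trans
    (by rw [interior_Iic]; rfl)

theorem frontier_setOf_le_inner {u : E} (hu : u ≠ 0) (t : ℝ) :
    frontier {y : E | t ≤ ⟪y, u⟫} = {y | ⟪y, u⟫ = t} := by
  simp_rw [real_inner_comm u]
  exact ((innerSL ℝ u).frontier_preimage (surjective_innerSL hu) (Ici t)).trans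
    (by rw [frontier_Ici]; rfl)

theorem geometric_hahn_banach_closed_point_inner {K : Set E} (hconv : Convex ℝ K)
    (hclosed : IsClosed K) (hne : K.Nonempty) {z : E} (hz : z ∉ K) :
    ∃ u : E, ‖u‖ = 1 ∧ ∃ t : ℝ, (∀ y ∈ K, ⟪y, u⟫ < t) ∧ t < ⟪z, u⟫ := by
  obtain ⟨f, c, hfK, hfz⟩ := geometric_hahn_banach_closed_point hconv hclosed hz
  set v := (InnerProductSpace.toDual ℝ E).symm f
  have hv : ∀ y, ⟪y, v⟫ = f y := fun y => by
    rw [real_inner_comm]; exact InnerProductSpace.toDual_symm_apply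
  have hv0 : v ≠ 0 := by
    rintro h
    obtain ⟨a, ha⟩ := hne
    have := hfK a ha
    rw [← hv, h, inner_zero_right] at this hfz
    linarith
  have hvpos : 0 < ‖v‖⁻¹ := inv_pos.2 (norm_pos_iff.2 hv0)
  have hu : ∀ y, ⟪y, ‖v‖⁻¹ • v⟫ = ‖v‖⁻¹ * f y := fun y => by rw [real_inner_smul_right, hv]
  refine ⟨‖v‖⁻¹ • v, norm_smul_inv_norm hv0, ‖v‖⁻¹ * c, fun y hy => ?_, ?_⟩
  · rw [hu]; exact mul_lt_mul_of_pos_left (hfK y hy) hvpos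
  · rw [hu]; exact mul_lt_mul_of_pos_left hfz hvpos

theorem MeasureTheory.Measure.addHaar_setOf_inner_eq [MeasurableSpace E] [BorelSpace E]
    [FiniteDimensional ℝ E] (μ : Measure E) [μ.IsAddHaarMeasure] {u : E} (hu : u ≠ 0) (t : ℝ) :
    μ {y | ⟪y, u⟫ = t} = 0 := by
  rw [← frontier_setOf_le_inner hu]
  have hlin : IsLinearMap ℝ fun y : E => ⟪y, u⟫ :=
    ⟨fun x y => inner_add_left x y u, fun c x => real_inner_smul_left x u c⟩
  exact (convex_halfSpace_ge hlin t).addHaar_frontier μ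

end InnerProductSpace

section CapIntegral

variable {E : Type*} [NormedAddCommGroup E] [InnerProductSpace ℝ E] [MeasurableSpace E]
  (μ : Measure E) {K : Set E} {φ : E → ℝ}

noncomputable def capIntegral (K : Set E) (φ : E → ℝ) (u : E) (t : ℝ) : ℝ :=
  ∫ y in K ∩ {y | t ≤ ⟪y, u⟫}, φ y ∂μ

variable [BorelSpace E]

theorem capIntegral_nonneg (hK : MeasurableSet K) (hφ : ∀ y ∈ K, 0 ≤ φ y) (u : E) (t : ℝ) :
    0 ≤ capIntegral μ K φ u t :=
  setIntegral_nonneg (hK.inter (measurableSet_setOf_le_inner u t)) fun y hy => hφ y hy.1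

theorem capIntegral_antitone (hK : MeasurableSet K) (hφint : IntegrableOn φ K μ)
    (hφ : ∀ y ∈ K, 0 ≤ φ y) (u : E) : Antitone (capIntegral μ K φ u) := fun t _ hts =>
  setIntegral_mono_set (hφint.mono_set inter_subset_left)
    (ae_restrict_of_forall_mem (hK.inter (measurableSet_setOf_le_inner u t)) fun y hy => hφ y hy.1)
    (Eventually.of_forall fun _ hy => ⟨hy.1, hts.trans hy.2⟩)

variable [FiniteDimensional ℝ E] [μ.IsAddHaarMeasure]

theorem continuousAt_capIntegral (hφ : IntegrableOn φ K μ) {u : E} (hu : u ≠ 0) (t : ℝ) :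
    ContinuousAt (fun p : E × ℝ => capIntegral μ K φ p.1 p.2) (u, t) := by
  simp_rw [capIntegral, ← setIntegral_indicator (measurableSet_setOf_le_inner _ _)]
  refine continuousAt_of_dominated
    (Eventually.of_forall fun p => hφ.aestronglyMeasurable.indicator
      (measurableSet_setOf_le_inner p.1 p.2))
    (Eventually.of_forall fun p => Eventually.of_forall fun y => norm_indicator_le_norm_self _ y)
    hφ.norm ?_
  -- off the null hyperplane `⟪y, u⟫ = t` the integrand is locally constant in `(u, t)`
  have hnull : ∀ᵐ y ∂μ.restrict K, ⟪y, u⟫ ≠ t :=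
    ae_restrict_of_ae (measure_eq_zero_iff_ae_notMem.1 (Measure.addHaar_setOf_inner_eq μ hu t))
  filter_upwards [hnull] with y hy
  have hcont : ContinuousAt (fun p : E × ℝ => ⟪y, p.1⟫) (u, t) := by fun_prop
  rcases hy.lt_or_gt with hlt | hgt
  · refine (continuousAt_const (y := (0 : ℝ))).congr
      ((hcont.eventually_lt continuousAt_snd hlt).mono fun p hp => ?_)
    exact (indicator_of_notMem (s := {y : E | p.2 ≤ ⟪y, p.1⟫}) (not_le.2 hp) φ).symm
  · refine (continuousAt_const (y := φ y)).congr
      ((continuousAt_snd.eventually_lt hcont hgt).mono fun p hp => ?_)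
    exact (indicator_of_mem (s := {y : E | p.2 ≤ ⟪y, p.1⟫}) hp.le φ).symm

theorem continuous_capIntegral_sphere (hφ : IntegrableOn φ K μ) :
    Continuous fun p : E × sphere (0 : E) 1 => capIntegral μ K φ p.2 ⟪p.1, p.2⟫ :=
  continuous_iff_continuousAt.2 fun p =>
    (continuousAt_capIntegral μ hφ (ne_zero_of_mem_unit_sphere p.2) _).comp
      (f := fun p : E × sphere (0 : E) 1 => ((p.2 : E), ⟪p.1, (p.2 : E)⟫)) (by fun_prop)

end CapIntegral

section FloatingBody

variable {d : ℕ} {K : Set (EuclideanSpace ℝ (Fin d))} {φ : EuclideanSpace ℝ (Fin d) → ℝ} {δ : ℝ}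

theorem mem_weightedFloatingBody_iff {z : EuclideanSpace ℝ (Fin d)} :
    z ∈ weightedFloatingBody K φ δ ↔
      ∀ u, ‖u‖ = 1 → ∀ t, capIntegral volume K φ u t ≤ δ → ⟪z, u⟫ ≤ t := by
  simp only [weightedFloatingBody, mem_iInter, mem_ofPred_eq, capIntegral]

theorem weightedFloatingBody_subset (hconv : Convex ℝ K) (hclosed : IsClosed K)
    (hne : K.Nonempty) (hδ : 0 ≤ δ) : weightedFloatingBody K φ δ ⊆ K := by
  intro z hz
  by_contra hzK
  obtain ⟨u, hu, t, hK, hz'⟩ := geometric_hahn_banach_closed_point_inner hconv hclosed hne hzK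
  have hcap : capIntegral volume K φ u t = 0 := by
    have hempty : K ∩ {y | t ≤ ⟪y, u⟫} = ∅ :=
      eq_empty_of_forall_notMem fun y hy => (hK y hy.1).not_ge hy.2
    rw [capIntegral, hempty, Measure.restrict_empty, integral_zero_measure]
  exact hz'.not_ge (mem_weightedFloatingBody_iff.1 hz u hu t (hcap.trans_le hδ))

theorem continuous_minimalCapDensity (hφ : IntegrableOn φ K) :
    Continuous (minimalCapDensity K φ) := by
  have h := isCompact_univ.continuous_sInf
    (f := fun x (u : sphere (0 : EuclideanSpace ℝ (Fin d)) 1) =>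
      capIntegral volume K φ u ⟪x, (u : EuclideanSpace ℝ (Fin d))⟫)
    (continuous_capIntegral_sphere volume hφ)
  simp only [image_univ] at h
  exact h

theorem exists_capIntegral_eq_minimalCapDensity [NeZero d] (hφ : IntegrableOn φ K)
    (x : EuclideanSpace ℝ (Fin d)) :
    ∃ u, ‖u‖ = 1 ∧ capIntegral volume K φ u ⟪x, u⟫ = minimalCapDensity K φ x := by
  have : Nonempty (sphere (0 : EuclideanSpace ℝ (Fin d)) 1) :=
    (NormedSpace.sphere_nonempty.2 zero_le_one).to_subtype
  obtain ⟨⟨u, hu⟩, h⟩ := (isCompact_range ((continuous_capIntegral_sphere volume hφ).comp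
    (Continuous.prodMk_right x))).sInf_mem (range_nonempty _)
  exact ⟨u, mem_sphere_zero_iff_norm.1 hu, h⟩

theorem minimalCapDensity_le_capIntegral (hK : MeasurableSet K) (hφ : ∀ y ∈ K, 0 ≤ φ y)
    (x : EuclideanSpace ℝ (Fin d)) {u : EuclideanSpace ℝ (Fin d)} (hu : ‖u‖ = 1) :
    minimalCapDensity K φ x ≤ capIntegral volume K φ u ⟪x, u⟫ :=
  ciInf_le ⟨0, forall_mem_range.2 fun _ => capIntegral_nonneg volume hK hφ _ _⟩
    (⟨u, mem_sphere_zero_iff_norm.2 hu⟩ : sphere (0 : EuclideanSpace ℝ (Fin d)) 1)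

theorem mem_weightedFloatingBody_of_lt_minimalCapDensity (hK : MeasurableSet K)
    (hφint : IntegrableOn φ K) (hφ : ∀ y ∈ K, 0 ≤ φ y) {x : EuclideanSpace ℝ (Fin d)}
    (hx : δ < minimalCapDensity K φ x) : x ∈ weightedFloatingBody K φ δ := by
  refine mem_weightedFloatingBody_iff.2 fun u hu t ht => ?_
  by_contra! hlt
  have := capIntegral_antitone volume hK hφint hφ u hlt.le
  linarith [minimalCapDensity_le_capIntegral hK hφ x hu]

theorem lt_capIntegral_of_mem_interior {x u : EuclideanSpace ℝ (Fin d)}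
    (hx : x ∈ interior (weightedFloatingBody K φ δ)) (hu : ‖u‖ = 1) :
    δ < capIntegral volume K φ u ⟪x, u⟫ := by
  by_contra! h
  have hsub : weightedFloatingBody K φ δ ⊆ {y | ⟪y, u⟫ ≤ ⟪x, u⟫} :=
    fun z hz => mem_weightedFloatingBody_iff.1 hz u hu _ h
  have := interior_mono hsub hx
  rw [interior_setOf_inner_le (norm_ne_zero_iff.1 (hu.trans_ne one_ne_zero))] at this
  exact lt_irrefl ⟪x, u⟫ this

theorem lt_minimalCapDensity_of_mem_interior [NeZero d] (hφ : IntegrableOn φ K)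
    {x : EuclideanSpace ℝ (Fin d)} (hx : x ∈ interior (weightedFloatingBody K φ δ)) :
    δ < minimalCapDensity K φ x := by
  obtain ⟨u, hu, h⟩ := exists_capIntegral_eq_minimalCapDensity hφ x
  exact h ▸ lt_capIntegral_of_mem_interior hx hu

end FloatingBody

/-- For a convex body `K ⊂ ℝ^d` and a continuous nonnegative weight `φ`, the interior of the
weighted floating body `K_δ^φ` equals the strict `δ`-superlevel set of the minimal cap
density. -/
theorem interior_weightedFloatingBody_eq (d : ℕ) (hd : 2 ≤ d)
    (K : Set (EuclideanSpace ℝ (Fin d))) (hKcomp : IsCompact K) (hKconv : Convex ℝ K)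
    (hKint : (interior K).Nonempty)
    (φ : EuclideanSpace ℝ (Fin d) → ℝ) (hφcont : ContinuousOn φ K)
    (hφpos : ∀ x ∈ K, 0 ≤ φ x) (δ : ℝ) (hδ : 0 < δ) :
    interior (weightedFloatingBody K φ δ)
      = {x ∈ K | δ < minimalCapDensity K φ x} := by
  have : NeZero d := ⟨by omega⟩
  have hKm : MeasurableSet K := hKcomp.isClosed.measurableSet
  have hφint : IntegrableOn φ K := hφcont.integrableOn_compact hKcomp
  refine Subset.antisymm (fun x hx => ⟨?_, lt_minimalCapDensity_of_mem_interior hφint hx⟩) ?_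
  · exact weightedFloatingBody_subset hKconv hKcomp.isClosed (hKint.mono interior_subset) hδ.le
      (interior_subset hx)
  · rintro x ⟨-, hx⟩
    exact interior_maximal
      (fun y hy => mem_weightedFloatingBody_of_lt_minimalCapDensity hKm hφint hφpos hy)
      (isOpen_lt continuous_const (continuous_minimalCapDensity hφint)) hx
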